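/- arXiv:2502.18820 — 3 statements merged into one kernel-verified Lean document; each statement's English description precedes it below -/
import Mathlib

section
/- For every α in (1,3), the integral ∫₀^∞ (x - sin x)/x^{α+1} dx converges and equals π C_α / α, where C_α = (1/π) ∫₀^∞ (1 - cos x)/x^α dx. -/
/-!
Integrate by parts against `F x = (x - sin x) / x ^ α`, whose derivative is
`(1 - cos x) / x ^ α - α (x - sin x) / x ^ (α + 1)`. Since `|x - sin x| ≤ x³ / 6` near `0` and
`|x - sin x| ≤ 2x` near `∞`, for `1 < α < 3` both integrands are integrable and `F` vanishes at
both ends, so `∫ (1 - cos x) / x ^ α = α ∫ (x - sin x) / x ^ (α + 1)`.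
-/

open MeasureTheory Set Real Filter Topology

section PowerBounds

variable {g : ℝ → ℝ} {a s C : ℝ}

lemma abs_div_rpow_le {x : ℝ} (hx : 0 < x) (h : |g x| ≤ C * x ^ a) :
    |g x / x ^ s| ≤ C * x ^ (a - s) := by
  have hxs : 0 < x ^ s := rpow_pos_of_pos hx s
  rw [abs_div, abs_of_pos hxs, rpow_sub hx, ← mul_div_assoc]
  exact div_le_div_of_nonneg_right h hxs.le

lemma continuousOn_div_rpow (hg : Continuous g) : ContinuousOn (fun x => g x / x ^ s) (Ioi 0) :=
  hg.continuousOn.div (continuousOn_id.rpow_const fun _ hx => Or.inl (ne_of_gt hx))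
    fun _ hx => (rpow_pos_of_pos hx s).ne'

lemma integrableOn_Ioo_zero_one_div_rpow (hg : Continuous g) (has : -1 < a - s)
    (h : ∀ x ∈ Ioo 0 1, |g x| ≤ C * x ^ a) :
    IntegrableOn (fun x => g x / x ^ s) (Ioo 0 1) := by
  refine Integrable.mono'
    (((intervalIntegral.integrableOn_Ioo_rpow_iff one_pos).2 has).const_mul C)
    (((continuousOn_div_rpow hg).mono Ioo_subset_Ioi_self).aestronglyMeasurable
      measurableSet_Ioo) ?_
  filter_upwards [ae_restrict_mem measurableSet_Ioo] with x hx
  exact abs_div_rpow_le hx.1 (h x hx)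

lemma integrableOn_Ici_one_div_rpow (hg : Continuous g) (has : a - s < -1)
    (h : ∀ x ∈ Ici 1, |g x| ≤ C * x ^ a) :
    IntegrableOn (fun x => g x / x ^ s) (Ici 1) := by
  have hpow : IntegrableOn (fun x : ℝ => C * x ^ (a - s)) (Ici 1) := by
    rw [integrableOn_Ici_iff_integrableOn_Ioi]
    exact (integrableOn_Ioi_rpow_of_lt has one_pos).const_mul C
  refine Integrable.mono' hpow (((continuousOn_div_rpow hg).mono
    fun x (hx : 1 ≤ x) => one_pos.trans_le hx).aestronglyMeasurable measurableSet_Ici) ?_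
  filter_upwards [ae_restrict_mem measurableSet_Ici] with x hx
  exact abs_div_rpow_le (one_pos.trans_le hx) (h x hx)

lemma integrableOn_Ioi_zero_div_rpow {b D : ℝ} (hg : Continuous g)
    (has : -1 < a - s) (hbs : b - s < -1)
    (h₀ : ∀ x ∈ Ioo 0 1, |g x| ≤ C * x ^ a) (h₁ : ∀ x ∈ Ici 1, |g x| ≤ D * x ^ b) :
    IntegrableOn (fun x => g x / x ^ s) (Ioi 0) := by
  rw [← Ioo_union_Ici_eq_Ioi one_pos]
  exact (integrableOn_Ioo_zero_one_div_rpow hg has h₀).union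
    (integrableOn_Ici_one_div_rpow hg hbs h₁)

lemma tendsto_div_rpow_nhdsGT_zero (has : 0 < a - s) (h : ∀ x ∈ Ioo 0 1, |g x| ≤ C * x ^ a) :
    Tendsto (fun x => g x / x ^ s) (𝓝[>] 0) (𝓝 0) := by
  have hpow : Tendsto (fun x : ℝ => C * x ^ (a - s)) (𝓝[>] 0) (𝓝 0) := by
    simpa [zero_rpow has.ne'] using
      ((continuousAt_rpow_const 0 _ (Or.inr has.le)).tendsto.mono_left
        nhdsWithin_le_nhds).const_mul C
  refine squeeze_zero_norm' ?_ hpow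
  filter_upwards [Ioo_mem_nhdsGT one_pos] with x hx
  exact abs_div_rpow_le hx.1 (h x hx)

lemma tendsto_div_rpow_atTop (has : a - s < 0) (h : ∀ x ∈ Ici 1, |g x| ≤ C * x ^ a) :
    Tendsto (fun x => g x / x ^ s) atTop (𝓝 0) := by
  have hpow : Tendsto (fun x : ℝ => C * x ^ (a - s)) atTop (𝓝 0) := by
    simpa using (tendsto_rpow_neg_atTop (neg_pos.2 has)).const_mul C
  refine squeeze_zero_norm' ?_ hpow
  filter_upwards [eventually_ge_atTop 1] with x hx
  exact abs_div_rpow_le (one_pos.trans_le hx) (h x hx)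

end PowerBounds

lemma abs_sub_sin_le_rpow {x : ℝ} (hx : 0 ≤ x) : |x - sin x| ≤ 6⁻¹ * x ^ (3 : ℝ) := by
  have := abs_sub_sin_le x
  rw [abs_of_nonneg hx] at this
  norm_cast
  linarith

lemma abs_sub_sin_le_two_mul_rpow {x : ℝ} (hx : 1 ≤ x) : |x - sin x| ≤ 2 * x ^ (1 : ℝ) := by
  rw [rpow_one, abs_le]
  constructor <;> linarith [neg_one_le_sin x, sin_le_one x]

lemma abs_one_sub_cos_le_rpow (x : ℝ) : |1 - cos x| ≤ 2⁻¹ * x ^ (2 : ℝ) := by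
  rw [abs_of_nonneg (sub_nonneg.2 (cos_le_one x))]
  norm_cast
  linarith [one_sub_sq_div_two_le_cos (x := x)]

lemma abs_one_sub_cos_le_two_mul_rpow (x : ℝ) : |1 - cos x| ≤ 2 * x ^ (0 : ℝ) := by
  rw [rpow_zero, abs_le]
  constructor <;> linarith [neg_one_le_cos x, cos_le_one x]

lemma hasDerivAt_sub_sin_div_rpow {x : ℝ} (hx : 0 < x) (α : ℝ) :
    HasDerivAt (fun y => (y - sin y) / y ^ α)
      ((1 - cos x) / x ^ α - α * ((x - sin x) / x ^ (α + 1))) x := by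
  refine (((hasDerivAt_id' x).sub (hasDerivAt_sin x)).div
    (hasDerivAt_rpow_const (Or.inl hx.ne')) (rpow_pos_of_pos hx α).ne').congr_deriv ?_
  rw [Pi.sub_apply, rpow_sub_one hx.ne', rpow_add_one hx.ne']
  field_simp

theorem stmt2 (α : ℝ) (hα : α ∈ Set.Ioo (1:ℝ) 3) :
    IntegrableOn (fun x : ℝ => (x - Real.sin x) / x ^ (α + 1)) (Set.Ioi 0) ∧
    ∫ x in Set.Ioi (0:ℝ), (x - Real.sin x) / x ^ (α + 1)
      = π * ((1 / π) * ∫ x in Set.Ioi (0:ℝ), (1 - Real.cos x) / x ^ α) / α := by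
  obtain ⟨hα1, hα3⟩ := hα
  have hsin₀ : ∀ x ∈ Ioo (0 : ℝ) 1, |x - sin x| ≤ 6⁻¹ * x ^ (3 : ℝ) :=
    fun x hx => abs_sub_sin_le_rpow hx.1.le
  have hsin₁ : ∀ x ∈ Ici (1 : ℝ), |x - sin x| ≤ 2 * x ^ (1 : ℝ) :=
    fun x hx => abs_sub_sin_le_two_mul_rpow hx
  have hsin : IntegrableOn (fun x : ℝ => (x - sin x) / x ^ (α + 1)) (Ioi 0) :=
    integrableOn_Ioi_zero_div_rpow (by fun_prop) (by linarith) (by linarith) hsin₀ hsin₁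
  have hcos : IntegrableOn (fun x : ℝ => (1 - cos x) / x ^ α) (Ioi 0) :=
    integrableOn_Ioi_zero_div_rpow (by fun_prop) (by linarith) (by linarith)
      (fun x _ => abs_one_sub_cos_le_rpow x) (fun x _ => abs_one_sub_cos_le_two_mul_rpow x)
  -- `F 0 = 0 / 0 ^ α = 0`, so the limit of `F` at `0⁺` is continuity of `F` at `0`.
  have ibp := integral_Ioi_of_hasDerivAt_of_tendsto
    (continuousWithinAt_Ioi_iff_Ici.1 (by
      simpa [ContinuousWithinAt] using tendsto_div_rpow_nhdsGT_zero (by linarith) hsin₀))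
    (fun x hx => hasDerivAt_sub_sin_div_rpow hx α) (hcos.sub (hsin.const_mul α))
    (tendsto_div_rpow_atTop (by linarith) hsin₁)
  rw [integral_sub hcos (hsin.const_mul α), integral_const_mul] at ibp
  refine ⟨hsin, ?_⟩
  rw [sin_zero, sub_zero, zero_div, sub_zero, sub_eq_zero] at ibp
  rw [one_div, ← mul_assoc, mul_inv_cancel₀ pi_ne_zero, one_mul, ibp,
    mul_div_cancel_left₀ _ (zero_lt_one.trans hα1).ne']
end

section
/- Let ν be a Lévy measure on ℝ, b ∈ ℝ, and define ω(λ) = bλ + ∫ℝ (λx·1_{|x|<1} - sin(λx)) ν(dx). Then lim_{λ→∞} ω(λ)/λ² = 0. -/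
open MeasureTheory Set Filter Topology Real

/-!
Divided by `λ²`, the integrand `λx·1_{|x|<1} - sin(λx)` is dominated, for `λ ≥ 1`, by the
`ν`-integrable function `min(x², 1)` (via `|t - sin t| ≤ t²` on `|x| < 1` and `|sin| ≤ 1`
elsewhere), and it is `O(1/λ)` pointwise. Dominated convergence sends the integral term to `0`.
-/

lemma abs_sub_sin_le_sq (t : ℝ) : |t - sin t| ≤ t ^ 2 := by
  rw [← sq_abs t]
  rcases le_or_gt |t| 2 with ht | ht
  · calc |t - sin t| ≤ |t| ^ 3 / 6 := abs_sub_sin_le t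
      _ ≤ |t| ^ 2 := by nlinarith [abs_nonneg t]
  · calc |t - sin t| ≤ |t| + |sin t| := abs_sub _ _
      _ ≤ |t| + 1 := by gcongr; exact abs_sin_le_one t
      _ ≤ |t| ^ 2 := by nlinarith

lemma integrable_min_sq_one_of_lintegral_lt_top {ν : Measure ℝ}
    (hν : ∫⁻ x, ENNReal.ofReal (min (x ^ 2) 1) ∂ν < ⊤) :
    Integrable (fun x : ℝ => min (x ^ 2) 1) ν := by
  refine ⟨by fun_prop, ?_⟩
  rwa [hasFiniteIntegral_iff_ofReal (ae_of_all _ fun x => le_min (sq_nonneg x) zero_le_one)]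

noncomputable def compensatedSin (l x : ℝ) : ℝ :=
  l * x * (if |x| < 1 then (1 : ℝ) else 0) - sin (l * x)

lemma measurable_compensatedSin (l : ℝ) : Measurable (compensatedSin l) :=
  ((measurable_const.mul measurable_id).mul
    (Measurable.ite (measurableSet_lt measurable_abs measurable_const)
      measurable_const measurable_const)).sub
    (measurable_sin.comp (measurable_const.mul measurable_id))

lemma abs_compensatedSin_le_sq_mul_min {l : ℝ} (hl : 1 ≤ l) (x : ℝ) :
    |compensatedSin l x| ≤ l ^ 2 * min (x ^ 2) 1 := by
  unfold compensatedSin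
  rcases lt_or_ge |x| 1 with hx | hx
  · have hx2 : x ^ 2 ≤ 1 := by nlinarith [sq_abs x, abs_nonneg x]
    rw [if_pos hx, mul_one, min_eq_left hx2, ← mul_pow]
    exact abs_sub_sin_le_sq (l * x)
  · have hx2 : 1 ≤ x ^ 2 := by nlinarith [sq_abs x]
    rw [if_neg hx.not_gt, mul_zero, zero_sub, abs_neg, min_eq_right hx2, mul_one]
    nlinarith [abs_sin_le_one (l * x)]

lemma abs_compensatedSin_le {l : ℝ} (hl : 0 ≤ l) (x : ℝ) :
    |compensatedSin l x| ≤ l * |x| + 1 := by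
  have htrunc : |l * x * (if |x| < 1 then (1 : ℝ) else 0)| ≤ l * |x| := by
    split_ifs <;> simp [abs_mul, abs_of_nonneg hl, mul_nonneg hl (abs_nonneg x)]
  calc |compensatedSin l x|
      ≤ |l * x * (if |x| < 1 then (1 : ℝ) else 0)| + |sin (l * x)| := abs_sub _ _
    _ ≤ l * |x| + 1 := add_le_add htrunc (abs_sin_le_one _)

lemma tendsto_compensatedSin_div_sq (x : ℝ) :
    Tendsto (fun l => compensatedSin l x / l ^ 2) atTop (𝓝 0) := by
  refine squeeze_zero_norm' ?_ ((tendsto_const_nhds (x := |x| + 1)).div_atTop tendsto_id)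
  filter_upwards [eventually_ge_atTop 1] with l hl
  have hl0 : 0 < l := one_pos.trans_le hl
  rw [norm_div, norm_pow, Real.norm_eq_abs, Real.norm_eq_abs, abs_of_pos hl0, id,
    div_le_div_iff₀ (by positivity) hl0]
  nlinarith [abs_compensatedSin_le hl0.le x, abs_nonneg x]

lemma tendsto_integral_compensatedSin_div_sq {ν : Measure ℝ}
    (hν : ∫⁻ x, ENNReal.ofReal (min (x ^ 2) 1) ∂ν < ⊤) :
    Tendsto (fun l => ∫ x, compensatedSin l x / l ^ 2 ∂ν) atTop (𝓝 0) := by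
  have h := tendsto_integral_filter_of_dominated_convergence (μ := ν) (f := fun _ => 0)
    (fun x => min (x ^ 2) 1)
    (Eventually.of_forall fun l => ((measurable_compensatedSin l).div_const _).aestronglyMeasurable)
    ?_ (integrable_min_sq_one_of_lintegral_lt_top hν)
    (ae_of_all _ tendsto_compensatedSin_div_sq)
  · simpa using h
  filter_upwards [eventually_ge_atTop 1] with l hl
  refine ae_of_all _ fun x => ?_
  rw [norm_div, norm_pow, Real.norm_eq_abs, Real.norm_eq_abs, sq_abs, div_le_iff₀ (by positivity),
    mul_comm]
  exact abs_compensatedSin_le_sq_mul_min hl x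

theorem stmt4_general (ν : Measure ℝ)
    (hνint : ∫⁻ x, ENNReal.ofReal (min (x ^ 2) 1) ∂ν < ⊤)
    (b : ℝ) (ω : ℝ → ℝ)
    (hω : ∀ l : ℝ, ω l = b * l
        + ∫ x, (l * x * (if |x| < 1 then (1:ℝ) else 0) - Real.sin (l * x)) ∂ν) :
    Tendsto (fun l : ℝ => ω l / l ^ 2) atTop (𝓝 0) := by
  have hsum := ((tendsto_const_nhds (x := b)).div_atTop tendsto_id).add
    (tendsto_integral_compensatedSin_div_sq hνint)
  rw [add_zero] at hsum
  refine hsum.congr' ?_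
  filter_upwards [eventually_gt_atTop 0] with l hl
  rw [hω l, add_div, integral_div, id]
  congr 1
  field_simp

theorem stmt4 (ν : Measure ℝ) (hν0 : ν {0} = 0)
    (hνint : ∫⁻ x, ENNReal.ofReal (min (x ^ 2) 1) ∂ν < ⊤)
    (b : ℝ) (ω : ℝ → ℝ)
    (hω : ∀ l : ℝ, ω l = b * l
        + ∫ x, (l * x * (if |x| < 1 then (1:ℝ) else 0) - Real.sin (l * x)) ∂ν) :
    Tendsto (fun l : ℝ => ω l / l ^ 2) atTop (𝓝 0) :=
  stmt4_general ν hνint b ω hω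
end

section
/- Suppose Assumption (A) holds: for every q > 0, ∫₀^∞ dλ/|q + Ψ(λ)| < ∞, where Ψ is the Lévy–Khinchin exponent of a one-dimensional Lévy process. Then ∫₀^∞ (λ² ∧ 1)/|Ψ(λ)| dλ < ∞. -/
open MeasureTheory Set Filter Topology Real

/-!
Write `φ = √‖Ψ‖`. Expanding `Ψ (l + m) - Ψ l - Ψ m` in the Lévy–Khintchine formula leaves the
Gaussian term `2 a l m` and `∫ (e^{ilx} - 1)(e^{imx} - 1) dν`; since `|e^{iθ} - 1|² = 2 (1 - cos θ)`
and `Re Ψ l = a l² + ∫ (1 - cos lx) dν`, AM–GM bounds this cross term by `t Re Ψ l + Re Ψ m / t`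
for every `t > 0`, hence by `2 φ(l) φ(m)`. So `φ` is subadditive, continuous, and vanishes at `0`,
while `1 / (1 + φ²) ≤ 1 / ‖1 + Ψ‖` is integrable on `(0, ∞)` because `Re Ψ ≥ 0`.

For such a `φ`, a point `l` with `φ l < 1` forces `φ ≤ 2` on `(l, l + δ]`, which is impossible far
out since the tails of `∫ 1 / (1 + φ²)` vanish; so `φ ≥ 1` on `[T, ∞)`. On `(0, T]`, if `φ l` were
smaller than `l / K`, subadditivity would keep `φ ≤ M + 1` on all of `(0, K]` (with `M` a bound of
`φ` on `[0, T]`), and the integral over `(0, K]` alone would exceed `∫ 1 / (1 + φ²)` for `K` large.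
Thus `‖Ψ l‖ ≥ c · min (l², 1)`, and `min (l², 1) / ‖Ψ l‖ ≤ C / (1 + ‖Ψ l‖)`.
-/

lemma two_mul_le_mul_sq_add_sq_div {t : ℝ} (ht : 0 < t) (u v : ℝ) :
    2 * u * v ≤ t * u ^ 2 + v ^ 2 / t := by
  have : t * u ^ 2 + v ^ 2 / t - 2 * u * v = (t * u - v) ^ 2 / t := by field_simp; ring
  linarith [show 0 ≤ (t * u - v) ^ 2 / t by positivity]

lemma le_two_mul_sqrt_mul_of_forall_le {X A B : ℝ} (hA : 0 ≤ A) (hB : 0 ≤ B)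
    (h : ∀ t > 0, X ≤ t * A + B / t) : X ≤ 2 * √(A * B) := by
  refine le_of_forall_pos_le_add fun ε hε ↦ ?_
  obtain ⟨s, hs, rfl⟩ : ∃ s ≥ 0, A = s ^ 2 := ⟨√A, sqrt_nonneg _, (sq_sqrt hA).symm⟩
  obtain ⟨r, hr, rfl⟩ : ∃ r ≥ 0, B = r ^ 2 := ⟨√B, sqrt_nonneg _, (sq_sqrt hB).symm⟩
  -- `t = √B / √A` would give the bound exactly, but `A` may vanish: take `(√B + η) / (√A + η)`
  set η := ε / (s + r + 1)
  have hη : 0 < η := by positivity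
  have h1 : (r + η) / (s + η) * s ^ 2 ≤ (r + η) * s := by
    rw [div_mul_eq_mul_div, div_le_iff₀ (by positivity)]
    nlinarith [mul_nonneg (mul_nonneg (by positivity : (0 : ℝ) ≤ r + η) hs) hη.le]
  have h2 : r ^ 2 / ((r + η) / (s + η)) ≤ r * (s + η) := by
    rw [div_div_eq_mul_div, div_le_iff₀ (by positivity)]
    nlinarith [mul_nonneg (mul_nonneg hr (by positivity : (0 : ℝ) ≤ s + η)) hη.le]
  have h3 : η * (s + r) ≤ ε := by
    rw [div_mul_eq_mul_div, div_le_iff₀ (by positivity)]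
    nlinarith
  rw [← mul_pow, sqrt_sq (by positivity)]
  nlinarith [h ((r + η) / (s + η)) (by positivity)]

section Subadditive

variable {φ : ℝ → ℝ}

lemma le_add_nat_mul_of_subadditive (hsub : ∀ x y, 0 ≤ x → 0 ≤ y → φ (x + y) ≤ φ x + φ y)
    {x y : ℝ} (hx : 0 ≤ x) (hy : 0 ≤ y) (n : ℕ) : φ (x + n * y) ≤ φ x + n * φ y := by
  induction n with
  | zero => simp
  | succ n ih =>
    calc φ (x + (n + 1 : ℕ) * y) = φ ((x + n * y) + y) := by push_cast; ring_nf
      _ ≤ φ (x + n * y) + φ y := hsub _ _ (by positivity) hy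
      _ ≤ φ x + (n + 1 : ℕ) * φ y := by push_cast; linarith

lemma exists_mem_Ico_le_add_div_mul_of_subadditive
    (hsub : ∀ x y, 0 ≤ x → 0 ≤ y → φ (x + y) ≤ φ x + φ y)
    {x l : ℝ} (hx : 0 ≤ x) (hl : 0 < l) (hφl : 0 ≤ φ l) :
    ∃ r ∈ Ico 0 l, φ x ≤ φ r + x / l * φ l := by
  set n := ⌊x / l⌋₊
  have hn : (n : ℝ) * l ≤ x := (le_div_iff₀ hl).1 (Nat.floor_le (by positivity))
  have hn' : x < (n + 1) * l := (div_lt_iff₀ hl).1 (Nat.lt_floor_add_one _)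
  refine ⟨x - n * l, ⟨by linarith, by linarith⟩, ?_⟩
  calc φ x = φ (x - n * l + n * l) := by ring_nf
    _ ≤ φ (x - n * l) + n * φ l := le_add_nat_mul_of_subadditive hsub (by linarith) hl.le n
    _ ≤ φ (x - n * l) + x / l * φ l := by
      gcongr
      exact Nat.floor_le (by positivity)

lemma div_one_add_sq_le_setIntegral_Ioc (hφ : ∀ x, 0 ≤ φ x)
    (hint : IntegrableOn (fun x ↦ 1 / (1 + φ x ^ 2)) (Ioi 0))
    {x₀ s B : ℝ} (hx₀ : 0 ≤ x₀) (hs : 0 ≤ s) (hB : ∀ x ∈ Ioc x₀ (x₀ + s), φ x ≤ B) :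
    s / (1 + B ^ 2) ≤ ∫ x in Ioc x₀ (x₀ + s), 1 / (1 + φ x ^ 2) := by
  have hle : ∀ x ∈ Ioc x₀ (x₀ + s), 1 / (1 + B ^ 2) ≤ 1 / (1 + φ x ^ 2) := fun x hx ↦ by
    have := hφ x
    gcongr
    exact hB x hx
  have := setIntegral_ge_of_const_le_real measurableSet_Ioc measure_Ioc_lt_top.ne hle
    (hint.mono_set fun x hx ↦ lt_of_le_of_lt hx₀ hx.1)
  rwa [Real.volume_real_Ioc_of_le (by linarith), add_sub_cancel_left, mul_comm,
    mul_one_div] at this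

lemma exists_one_le_of_subadditive (hcont : ContinuousAt φ 0) (h0 : φ 0 = 0)
    (hφ : ∀ x, 0 ≤ φ x) (hsub : ∀ x y, 0 ≤ x → 0 ≤ y → φ (x + y) ≤ φ x + φ y)
    (hint : IntegrableOn (fun x ↦ 1 / (1 + φ x ^ 2)) (Ioi 0)) :
    ∃ T ≥ 0, ∀ x ≥ T, 1 ≤ φ x := by
  obtain ⟨δ, hδ, hφδ⟩ : ∃ δ > 0, ∀ y ∈ Icc 0 δ, φ y ≤ 1 := by
    obtain ⟨ε, hε, h⟩ := Metric.eventually_nhds_iff.1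
      (hcont.eventually (Iio_mem_nhds (h0 ▸ one_pos)))
    refine ⟨ε / 2, half_pos hε, fun y hy ↦ le_of_lt (h ?_)⟩
    rw [Real.dist_eq, sub_zero, abs_of_nonneg hy.1]
    linarith [hy.2]
  have htail := tendsto_integral_Ioi_zero (μ := volume) (f := fun x ↦ 1 / (1 + φ x ^ 2))
    tendsto_id
  obtain ⟨T, hT, hT0⟩ :=
    ((htail.eventually (gt_mem_nhds (by positivity : 0 < δ / 5))).and
      (eventually_ge_atTop 0)).exists
  refine ⟨T, hT0, fun x hx ↦ ?_⟩
  by_contra! hφx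
  have hB : ∀ y ∈ Ioc x (x + δ), φ y ≤ 2 := fun y hy ↦ by
    have := hsub x (y - x) (by linarith) (by linarith [hy.1])
    rw [add_sub_cancel] at this
    linarith [hφδ (y - x) ⟨by linarith [hy.1], by linarith [hy.2]⟩]
  have hlow := div_one_add_sq_le_setIntegral_Ioc hφ hint (by linarith) hδ.le hB
  have hup : ∫ y in Ioc x (x + δ), 1 / (1 + φ y ^ 2) ≤ ∫ y in Ioi T, 1 / (1 + φ y ^ 2) :=
    setIntegral_mono_set (hint.mono_set (Ioi_subset_Ioi hT0))
      (Eventually.of_forall fun y ↦ by positivity)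
      (Eventually.of_forall fun y hy ↦ lt_of_le_of_lt hx hy.1)
  norm_num at hlow hT hup
  linarith

lemma le_mul_of_subadditive (hφ : ∀ x, 0 ≤ φ x)
    (hsub : ∀ x y, 0 ≤ x → 0 ≤ y → φ (x + y) ≤ φ x + φ y)
    (hint : IntegrableOn (fun x ↦ 1 / (1 + φ x ^ 2)) (Ioi 0))
    {T M : ℝ} (hM : ∀ x ∈ Icc 0 T, φ x ≤ M) {l : ℝ} (hl : 0 < l) (hlT : l ≤ T) :
    l ≤ ((∫ x in Ioi 0, 1 / (1 + φ x ^ 2)) * (1 + (M + 1) ^ 2) + 1) * φ l := by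
  set V := ∫ x in Ioi 0, 1 / (1 + φ x ^ 2)
  set K := V * (1 + (M + 1) ^ 2) + 1
  have hV : 0 ≤ V := setIntegral_nonneg measurableSet_Ioi fun x _ ↦ by positivity
  have hK : 0 < K := by positivity
  by_contra! h
  have hB : ∀ y ∈ Ioc 0 (0 + K), φ y ≤ M + 1 := fun y hy ↦ by
    obtain ⟨r, hr, hy'⟩ := exists_mem_Ico_le_add_div_mul_of_subadditive hsub hy.1.le hl (hφ l)
    have hr' : φ r ≤ M := hM r ⟨hr.1, hr.2.le.trans hlT⟩
    have hyl : y / l * φ l ≤ 1 := by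
      rw [div_mul_eq_mul_div, div_le_one hl]
      calc y * φ l ≤ K * φ l := by gcongr; exacts [hφ l, by simpa using hy.2]
        _ ≤ l := h.le
    linarith
  have hlow := div_one_add_sq_le_setIntegral_Ioc hφ hint le_rfl hK.le hB
  have hup : ∫ x in Ioc 0 (0 + K), 1 / (1 + φ x ^ 2) ≤ V :=
    setIntegral_mono_set hint (Eventually.of_forall fun x ↦ by positivity)
      Ioc_subset_Ioi_self.eventuallyLE
  rw [div_le_iff₀ (by positivity)] at hlow
  nlinarith

lemma exists_pos_mul_min_sq_le_sq_of_subadditive (hcont : Continuous φ) (h0 : φ 0 = 0)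
    (hφ : ∀ x, 0 ≤ φ x) (hsub : ∀ x y, 0 ≤ x → 0 ≤ y → φ (x + y) ≤ φ x + φ y)
    (hint : IntegrableOn (fun x ↦ 1 / (1 + φ x ^ 2)) (Ioi 0)) :
    ∃ c > 0, ∀ x > 0, c * min (x ^ 2) 1 ≤ φ x ^ 2 := by
  obtain ⟨T, hT0, hT⟩ := exists_one_le_of_subadditive hcont.continuousAt h0 hφ hsub hint
  obtain ⟨M, hM⟩ := (isCompact_Icc (a := 0) (b := T)).exists_bound_of_continuousOn
    hcont.continuousOn
  set K := (∫ x in Ioi 0, 1 / (1 + φ x ^ 2)) * (1 + (M + 1) ^ 2) + 1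
  have hK : 1 ≤ K := by
    have : 0 ≤ ∫ x in Ioi 0, 1 / (1 + φ x ^ 2) :=
      setIntegral_nonneg measurableSet_Ioi fun x _ ↦ by positivity
    simp only [K]
    nlinarith
  refine ⟨1 / K ^ 2, by positivity, fun x hx ↦ ?_⟩
  rcases le_or_gt x T with hxT | hxT
  · have hxK : x / K ≤ φ x := by
      rw [div_le_iff₀ (by positivity), mul_comm]
      exact le_mul_of_subadditive hφ hsub hint (fun y hy ↦ (Real.le_norm_self _).trans (hM y hy))
        hx hxT
    calc 1 / K ^ 2 * min (x ^ 2) 1 ≤ 1 / K ^ 2 * x ^ 2 := by gcongr; exact min_le_left _ _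
      _ = (x / K) ^ 2 := by rw [div_pow, one_div_mul_eq_div]
      _ ≤ φ x ^ 2 := by gcongr
  · calc 1 / K ^ 2 * min (x ^ 2) 1 ≤ 1 * 1 :=
          mul_le_mul (div_le_one_of_le₀ (by nlinarith) (by positivity)) (min_le_right _ _)
            (by positivity) zero_le_one
      _ ≤ φ x ^ 2 := by nlinarith [hT x hxT.le]

theorem integrableOn_min_sq_div_sq_of_subadditive (hcont : Continuous φ) (h0 : φ 0 = 0)
    (hφ : ∀ x, 0 ≤ φ x) (hsub : ∀ x y, 0 ≤ x → 0 ≤ y → φ (x + y) ≤ φ x + φ y)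
    (hint : IntegrableOn (fun x ↦ 1 / (1 + φ x ^ 2)) (Ioi 0)) :
    IntegrableOn (fun x ↦ min (x ^ 2) 1 / φ x ^ 2) (Ioi 0) := by
  obtain ⟨c, hc, hlow⟩ := exists_pos_mul_min_sq_le_sq_of_subadditive hcont h0 hφ hsub hint
  refine (hint.const_mul (1 / c + 1)).mono'
    (((by fun_prop : Measurable fun x : ℝ ↦ min (x ^ 2) 1).div
      (hcont.measurable.pow_const 2)).aestronglyMeasurable) ?_
  filter_upwards [ae_restrict_mem measurableSet_Ioi] with x hx
  have hm : 0 < min (x ^ 2) 1 := lt_min (pow_pos hx 2) one_pos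
  have hq : 0 < φ x ^ 2 := (mul_pos hc hm).trans_le (hlow x hx)
  have hmq : min (x ^ 2) 1 ≤ 1 / c * φ x ^ 2 := by
    rw [one_div_mul_eq_div, le_div_iff₀ hc, mul_comm]
    exact hlow x hx
  have hmq' : min (x ^ 2) 1 * φ x ^ 2 ≤ φ x ^ 2 := mul_le_of_le_one_left hq.le (min_le_right _ _)
  rw [Real.norm_of_nonneg (by positivity), div_le_iff₀ hq, mul_one_div, div_mul_eq_mul_div,
    le_div_iff₀ (by positivity)]
  linarith

end Subadditive

lemma norm_exp_I_mul_sub_one_sq (θ : ℝ) :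
    ‖Complex.exp (Complex.I * θ) - 1‖ ^ 2 = 2 * (1 - Real.cos θ) := by
  have hcos := Real.cos_two_mul_eq_one_sub (θ / 2)
  rw [mul_div_cancel₀ _ two_ne_zero] at hcos
  rw [Complex.norm_exp_I_mul_ofReal_sub_one, Real.norm_eq_abs, sq_abs, hcos]
  ring

lemma norm_exp_I_mul_sub_one_sub_le (θ : ℝ) :
    ‖Complex.exp (Complex.I * θ) - 1 - Complex.I * θ‖ ≤ 2 * θ ^ 2 := by
  have hIθ : ‖Complex.I * θ‖ = |θ| := by simp
  rcases le_or_gt |θ| 1 with hθ | hθ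
  · calc _ ≤ ‖Complex.I * θ‖ ^ 2 := Complex.norm_exp_sub_one_sub_id_le (hIθ ▸ hθ)
      _ ≤ 2 * θ ^ 2 := by rw [hIθ, sq_abs]; nlinarith [sq_nonneg θ]
  · calc _ ≤ ‖Complex.exp (Complex.I * θ) - 1‖ + ‖Complex.I * θ‖ := norm_sub_le _ _
      _ ≤ |θ| + |θ| := by
        rw [hIθ]
        gcongr
        exact Real.norm_exp_I_mul_ofReal_sub_one_le
      _ ≤ 2 * θ ^ 2 := by nlinarith [sq_abs θ]

lemma norm_exp_I_mul_sub_one_le_two (θ : ℝ) : ‖Complex.exp (Complex.I * θ) - 1‖ ≤ 2 := by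
  calc _ ≤ ‖Complex.exp (Complex.I * θ)‖ + ‖(1 : ℂ)‖ := norm_sub_le _ _
    _ = 2 := by rw [Complex.norm_exp_I_mul_ofReal, norm_one]; norm_num

noncomputable def levyIntegrand (l x : ℝ) : ℂ :=
  1 - Complex.exp (Complex.I * (l * x)) + Complex.I * (l * x) * (if |x| < 1 then 1 else 0)

noncomputable def levyExponent (a b : ℝ) (ν : Measure ℝ) (l : ℝ) : ℂ :=
  ((a * l ^ 2 : ℝ) : ℂ) + Complex.I * ((b * l : ℝ) : ℂ) + ∫ x, levyIntegrand l x ∂ν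

lemma re_levyIntegrand (l x : ℝ) : (levyIntegrand l x).re = 1 - Real.cos (l * x) := by
  rw [levyIntegrand]
  split_ifs <;> simp [Complex.exp_re]

lemma norm_levyIntegrand_le (l x : ℝ) : ‖levyIntegrand l x‖ ≤ 2 * (l ^ 2 + 1) * min (x ^ 2) 1 := by
  rw [levyIntegrand, ← Complex.ofReal_mul]
  split_ifs with hx
  · have hx2 : x ^ 2 ≤ 1 := by nlinarith [sq_abs x, abs_nonneg x]
    rw [min_eq_left hx2, mul_one, ← norm_neg]
    calc _ = ‖Complex.exp (Complex.I * ↑(l * x)) - 1 - Complex.I * ↑(l * x)‖ := by ring_nf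
      _ ≤ 2 * (l * x) ^ 2 := norm_exp_I_mul_sub_one_sub_le _
      _ ≤ _ := by nlinarith [sq_nonneg x, sq_nonneg l]
  · have hx2 : 1 ≤ x ^ 2 := by nlinarith [sq_abs x, not_lt.1 hx]
    rw [min_eq_right hx2, mul_zero, add_zero, ← norm_neg, neg_sub]
    linarith [norm_exp_I_mul_sub_one_le_two (l * x), sq_nonneg l]

lemma levyIntegrand_add_sub (l m x : ℝ) :
    levyIntegrand l x + levyIntegrand m x - levyIntegrand (l + m) x
      = (Complex.exp (Complex.I * ↑(l * x)) - 1) * (Complex.exp (Complex.I * ↑(m * x)) - 1) := by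
  simp only [levyIntegrand, Complex.ofReal_add, Complex.ofReal_mul]
  rw [show Complex.I * ((l + m) * x) = Complex.I * (l * x) + Complex.I * (m * x) by ring,
    Complex.exp_add]
  ring

lemma norm_levyIntegrand_add_sub_le (l m x : ℝ) {t : ℝ} (ht : 0 < t) :
    ‖levyIntegrand l x + levyIntegrand m x - levyIntegrand (l + m) x‖
      ≤ t * (levyIntegrand l x).re + (levyIntegrand m x).re / t := by
  rw [levyIntegrand_add_sub, norm_mul, re_levyIntegrand, re_levyIntegrand]
  have := two_mul_le_mul_sq_add_sq_div ht ‖Complex.exp (Complex.I * ↑(l * x)) - 1‖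
    ‖Complex.exp (Complex.I * ↑(m * x)) - 1‖
  rw [norm_exp_I_mul_sub_one_sq, norm_exp_I_mul_sub_one_sq, mul_div_assoc] at this
  linarith

lemma measurable_levyIntegrand (l : ℝ) : Measurable (levyIntegrand l) := by
  unfold levyIntegrand
  have : Measurable fun x : ℝ ↦ if |x| < 1 then (1 : ℂ) else 0 :=
    Measurable.ite (measurableSet_lt measurable_abs measurable_const) measurable_const
      measurable_const
  fun_prop

lemma continuous_levyIntegrand_left (x : ℝ) : Continuous fun l ↦ levyIntegrand l x := by
  unfold levyIntegrand
  fun_prop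

section LevyExponent

variable {a b : ℝ} {ν : Measure ℝ}

lemma levyExponent_zero : levyExponent a b ν 0 = 0 := by
  simp [levyExponent, levyIntegrand]

variable (hν : Integrable (fun x ↦ min (x ^ 2) 1) ν)
include hν

lemma integrable_levyIntegrand (l : ℝ) : Integrable (levyIntegrand l) ν :=
  (hν.const_mul _).mono' (measurable_levyIntegrand l).aestronglyMeasurable
    (Eventually.of_forall (norm_levyIntegrand_le l))

lemma re_levyExponent (l : ℝ) :
    (levyExponent a b ν l).re = a * l ^ 2 + ∫ x, (levyIntegrand l x).re ∂ν := by
  have := integral_re (integrable_levyIntegrand hν l)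
  simp only [RCLike.re_to_complex] at this
  simp [levyExponent, this, -Complex.ofReal_mul, -Complex.ofReal_pow]

lemma re_levyExponent_nonneg (ha : 0 ≤ a) (l : ℝ) : 0 ≤ (levyExponent a b ν l).re := by
  rw [re_levyExponent hν]
  have hre : ∀ x, 0 ≤ (levyIntegrand l x).re := fun x ↦ by
    rw [re_levyIntegrand]
    linarith [cos_le_one (l * x)]
  have := integral_nonneg (μ := ν) (f := fun x ↦ (levyIntegrand l x).re) hre
  positivity

lemma levyExponent_add_sub (l m : ℝ) :
    levyExponent a b ν l + levyExponent a b ν m - levyExponent a b ν (l + m)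
      = ((-2 * a * l * m : ℝ) : ℂ)
        + ∫ x, (levyIntegrand l x + levyIntegrand m x - levyIntegrand (l + m) x) ∂ν := by
  have hl := integrable_levyIntegrand hν l
  have hm := integrable_levyIntegrand hν m
  have hlm : Integrable (fun x ↦ levyIntegrand l x + levyIntegrand m x) ν := hl.add hm
  rw [integral_sub hlm (integrable_levyIntegrand hν (l + m)), integral_add hl hm]
  simp only [levyExponent]
  push_cast
  ring

lemma norm_levyExponent_add_sub_le (ha : 0 ≤ a) (l m : ℝ) {t : ℝ} (ht : 0 < t) :
    ‖levyExponent a b ν l + levyExponent a b ν m - levyExponent a b ν (l + m)‖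
      ≤ t * (levyExponent a b ν l).re + (levyExponent a b ν m).re / t := by
  have hre (l : ℝ) : Integrable (fun x ↦ (levyIntegrand l x).re) ν :=
    (integrable_levyIntegrand hν l).re
  have hgauss : ‖((-2 * a * l * m : ℝ) : ℂ)‖ ≤ t * (a * l ^ 2) + a * m ^ 2 / t := by
    rw [Complex.norm_real, Real.norm_eq_abs, abs_mul, abs_mul, abs_mul, abs_neg, abs_two,
      abs_of_nonneg ha, ← sq_abs l, ← sq_abs m]
    calc 2 * a * |l| * |m| = a * (2 * |l| * |m|) := by ring
      _ ≤ a * (t * |l| ^ 2 + |m| ^ 2 / t) :=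
        mul_le_mul_of_nonneg_left (two_mul_le_mul_sq_add_sq_div ht |l| |m|) ha
      _ = _ := by ring
  have hjump : ‖∫ x, (levyIntegrand l x + levyIntegrand m x - levyIntegrand (l + m) x) ∂ν‖
      ≤ ∫ x, (t * (levyIntegrand l x).re + (levyIntegrand m x).re / t) ∂ν :=
    (norm_integral_le_integral_norm _).trans <|
      integral_mono ((((integrable_levyIntegrand hν l).add (integrable_levyIntegrand hν m)).sub
        (integrable_levyIntegrand hν (l + m))).norm)
        (((hre l).const_mul t).add ((hre m).div_const t))
        fun x ↦ norm_levyIntegrand_add_sub_le l m x ht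
  rw [levyExponent_add_sub hν, re_levyExponent hν, re_levyExponent hν]
  rw [integral_add ((hre l).const_mul t) ((hre m).div_const t), integral_const_mul,
    integral_div] at hjump
  calc _ ≤ _ := norm_add_le _ _
    _ ≤ _ := add_le_add hgauss hjump
    _ = _ := by ring

lemma sqrt_norm_levyExponent_add_le (ha : 0 ≤ a) (l m : ℝ) :
    √‖levyExponent a b ν (l + m)‖ ≤ √‖levyExponent a b ν l‖ + √‖levyExponent a b ν m‖ := by
  set A := ‖levyExponent a b ν l‖
  set B := ‖levyExponent a b ν m‖
  have hcross : ‖levyExponent a b ν l + levyExponent a b ν m - levyExponent a b ν (l + m)‖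
      ≤ 2 * √(A * B) :=
    le_two_mul_sqrt_mul_of_forall_le (norm_nonneg _) (norm_nonneg _) fun t ht ↦
      (norm_levyExponent_add_sub_le hν ha l m ht).trans (by
        gcongr <;> exact Complex.re_le_norm _)
  have htri : ‖levyExponent a b ν (l + m)‖ ≤ A + B
      + ‖levyExponent a b ν l + levyExponent a b ν m - levyExponent a b ν (l + m)‖ := by
    calc _ = ‖(levyExponent a b ν l + levyExponent a b ν m)
          - (levyExponent a b ν l + levyExponent a b ν m - levyExponent a b ν (l + m))‖ := by
          ring_nf
      _ ≤ _ := norm_sub_le _ _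
      _ ≤ _ := by gcongr; exact norm_add_le _ _
  rw [sqrt_le_left (by positivity), add_sq, sq_sqrt (norm_nonneg _), sq_sqrt (norm_nonneg _),
    mul_assoc, ← sqrt_mul (norm_nonneg _)]
  linarith

lemma continuous_levyExponent : Continuous (levyExponent a b ν) := by
  have hint : Continuous fun l ↦ ∫ x, levyIntegrand l x ∂ν := by
    refine continuous_iff_continuousAt.2 fun l₀ ↦ continuousAt_of_dominated
      (bound := fun x ↦ 2 * ((|l₀| + 1) ^ 2 + 1) * min (x ^ 2) 1)
      (Eventually.of_forall fun l ↦ (measurable_levyIntegrand l).aestronglyMeasurable) ?_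
      (hν.const_mul _)
      (Eventually.of_forall fun x ↦ (continuous_levyIntegrand_left x).continuousAt)
    filter_upwards [Metric.ball_mem_nhds l₀ one_pos] with l hl
    refine Eventually.of_forall fun x ↦ (norm_levyIntegrand_le l x).trans ?_
    have hl' : |l| ≤ |l₀| + 1 := by
      have := abs_sub_abs_le_abs_sub l l₀
      rw [Metric.mem_ball, Real.dist_eq] at hl
      linarith
    have hl2 : l ^ 2 ≤ (|l₀| + 1) ^ 2 := by
      rw [← sq_abs]
      gcongr
    have hmin : 0 ≤ min (x ^ 2) 1 := le_min (sq_nonneg x) zero_le_one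
    gcongr
  unfold levyExponent
  fun_prop

end LevyExponent

lemma integrable_one_div_one_add_norm {α : Type*} [MeasurableSpace α] {μ : Measure α}
    {Ψ : α → ℂ} (hΨ : Measurable Ψ) (hre : ∀ x, 0 ≤ (Ψ x).re)
    (h : Integrable (fun x ↦ 1 / ‖1 + Ψ x‖) μ) : Integrable (fun x ↦ 1 / (1 + ‖Ψ x‖)) μ := by
  refine h.mono' (by fun_prop : Measurable fun x ↦ 1 / (1 + ‖Ψ x‖)).aestronglyMeasurable
    (Eventually.of_forall fun x ↦ ?_)
  have h1 : 1 ≤ ‖1 + Ψ x‖ := by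
    have := Complex.re_le_norm (1 + Ψ x)
    rw [Complex.add_re, Complex.one_re] at this
    linarith [hre x]
  rw [Real.norm_of_nonneg (by positivity)]
  exact one_div_le_one_div_of_le (by linarith) ((norm_add_le _ _).trans_eq (by rw [norm_one]))

theorem stmt10_general (a b : ℝ) (ha : 0 ≤ a) (ν : Measure ℝ)
    (hνint : ∫⁻ x, ENNReal.ofReal (min (x ^ 2) 1) ∂ν < ⊤)
    (Ψ : ℝ → ℂ)
    (hΨ : ∀ l : ℝ, Ψ l = ((a * l ^ 2 : ℝ) : ℂ) + Complex.I * ((b * l : ℝ) : ℂ)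
        + ∫ x, ((1 : ℂ) - Complex.exp (Complex.I * (l * x))
            + Complex.I * (l * x) * (if |x| < 1 then 1 else 0)) ∂ν)
    (hA : ∀ q : ℝ, 0 < q →
        IntegrableOn (fun l : ℝ => 1 / ‖(q : ℂ) + Ψ l‖) (Set.Ioi 0)) :
    IntegrableOn (fun l : ℝ => min (l ^ 2) 1 / ‖Ψ l‖) (Set.Ioi 0) := by
  obtain rfl : Ψ = levyExponent a b ν := funext hΨ
  have hν : Integrable (fun x ↦ min (x ^ 2) 1) ν :=
    ⟨by fun_prop, (hasFiniteIntegral_iff_ofReal (Eventually.of_forall fun x ↦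
      le_min (sq_nonneg x) zero_le_one)).2 hνint⟩
  have hcont := continuous_levyExponent (a := a) (b := b) hν
  have hA1 : IntegrableOn (fun l ↦ 1 / ‖1 + levyExponent a b ν l‖) (Ioi 0) := by
    simpa using hA 1 one_pos
  have hint : IntegrableOn (fun l ↦ 1 / (1 + √‖levyExponent a b ν l‖ ^ 2)) (Ioi 0) := by
    simp only [sq_sqrt (norm_nonneg _)]
    exact integrable_one_div_one_add_norm hcont.measurable (re_levyExponent_nonneg hν ha) hA1
  have := integrableOn_min_sq_div_sq_of_subadditive (by fun_prop) (by simp [levyExponent_zero])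
    (fun _ ↦ sqrt_nonneg _) (fun l m _ _ ↦ sqrt_norm_levyExponent_add_le hν ha l m) hint
  simpa only [sq_sqrt (norm_nonneg _)] using this

theorem stmt10 (a b : ℝ) (ha : 0 ≤ a) (ν : Measure ℝ) (hν0 : ν {0} = 0)
    (hνint : ∫⁻ x, ENNReal.ofReal (min (x ^ 2) 1) ∂ν < ⊤)
    (Ψ : ℝ → ℂ)
    (hΨ : ∀ l : ℝ, Ψ l = ((a * l ^ 2 : ℝ) : ℂ) + Complex.I * ((b * l : ℝ) : ℂ)
        + ∫ x, ((1 : ℂ) - Complex.exp (Complex.I * (l * x))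
            + Complex.I * (l * x) * (if |x| < 1 then 1 else 0)) ∂ν)
    (hA : ∀ q : ℝ, 0 < q →
        IntegrableOn (fun l : ℝ => 1 / ‖(q : ℂ) + Ψ l‖) (Set.Ioi 0)) :
    IntegrableOn (fun l : ℝ => min (l ^ 2) 1 / ‖Ψ l‖) (Set.Ioi 0) :=
  stmt10_general a b ha ν hνint Ψ hΨ hA
end
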